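/- arXiv:0803.1296 — 5 statements merged into one kernel-verified Lean document; each statement's English description precedes it below -/
import Mathlib

section
/- Fix δ > 0 and Δ ∈ ℝ, and define in ℝ⁴ the points u = (1,0,0,Δ), v = (1,1,0,Δ), w = (0,1,0,Δ), p = (0,0,0,Δ+δ), and c = (1/2, 1/2, δ/2, Δ+δ/2). Then the set of points x ∈ ℝ⁴ satisfying ‖x − u‖ = ‖x − v‖ = ‖x − w‖ = ‖x − p‖ is exactly the line { c + s·(0,0,1,0) : s ∈ ℝ }. -/
/-! Each equidistance condition `‖x - a‖ = ‖x - b‖` is the perpendicular bisector of `a` and `b`,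
a linear equation in `x`. The pairs `u, v` and `v, w` fix `x₁ = 1/2` and `x₀ = 1/2`; the pair `w, p`
then reads `δ x₃ = δ (Δ + δ/2)`, which fixes `x₃` because `δ ≠ 0`. No condition involves `x₂`. -/

noncomputable def pt (a b c d : ℝ) : EuclideanSpace ℝ (Fin 4) := !₂[a, b, c, d]

lemma norm_sub_pt_sq (x : EuclideanSpace ℝ (Fin 4)) (a b c d : ℝ) :
    ‖x - pt a b c d‖ ^ 2 = (x 0 - a) ^ 2 + (x 1 - b) ^ 2 + (x 2 - c) ^ 2 + (x 3 - d) ^ 2 := by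
  simp [EuclideanSpace.norm_sq_eq, Fin.sum_univ_four, pt]

lemma norm_sub_pt_eq_norm_sub_pt_iff (x : EuclideanSpace ℝ (Fin 4)) (a b c d a' b' c' d' : ℝ) :
    ‖x - pt a b c d‖ = ‖x - pt a' b' c' d'‖ ↔
      2 * ((a' - a) * x 0 + (b' - b) * x 1 + (c' - c) * x 2 + (d' - d) * x 3) =
        (a' ^ 2 + b' ^ 2 + c' ^ 2 + d' ^ 2) - (a ^ 2 + b ^ 2 + c ^ 2 + d ^ 2) := by
  rw [← sq_eq_sq₀ (norm_nonneg _) (norm_nonneg _), norm_sub_pt_sq, norm_sub_pt_sq]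
  constructor <;> intro h <;> linarith

lemma exists_eq_pt_add_smul_iff (x : EuclideanSpace ℝ (Fin 4)) (a b c d : ℝ) :
    (∃ s : ℝ, x = pt a b c d + s • pt 0 0 1 0) ↔ x 0 = a ∧ x 1 = b ∧ x 3 = d := by
  constructor
  · rintro ⟨s, rfl⟩
    simp [pt]
  · rintro ⟨h0, h1, h3⟩
    refine ⟨x 2 - c, PiLp.ext fun i => ?_⟩
    fin_cases i <;> simp [pt, h0, h1, h3]

/-- The set of points equidistant from `u = (1,0,0,Δ)`, `v = (1,1,0,Δ)`, `w = (0,1,0,Δ)`,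
`p = (0,0,0,Δ+δ)` is the line through `c = (1/2,1/2,δ/2,Δ+δ/2)` in direction `(0,0,1,0)`. -/
theorem equidistant_set_is_line (Δ δ : ℝ) (hδ : 0 < δ) :
    {x : EuclideanSpace ℝ (Fin 4) |
        ‖x - pt 1 0 0 Δ‖ = ‖x - pt 1 1 0 Δ‖ ∧
        ‖x - pt 1 1 0 Δ‖ = ‖x - pt 0 1 0 Δ‖ ∧
        ‖x - pt 0 1 0 Δ‖ = ‖x - pt 0 0 0 (Δ + δ)‖}
      = {x : EuclideanSpace ℝ (Fin 4) |
          ∃ s : ℝ, x = pt (1/2) (1/2) (δ/2) (Δ + δ/2) + s • pt 0 0 1 0} := by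
  ext x
  simp only [Set.mem_ofPred_eq, exists_eq_pt_add_smul_iff,
    norm_sub_pt_eq_norm_sub_pt_iff]
  constructor
  · rintro ⟨huv, hvw, hwp⟩
    have hx1 : x 1 = 1 / 2 := by linarith
    refine ⟨by linarith, hx1, mul_left_cancel₀ hδ.ne' (?_ : δ * x 3 = δ * (Δ + δ / 2))⟩
    rw [hx1] at hwp
    linarith
  · rintro ⟨hx0, hx1, hx3⟩
    rw [hx0, hx1, hx3]
    exact ⟨by ring, by ring, by ring⟩
end

section
/- For every δ > 0 and every Δ ∈ ℝ, the five points p = (0,0,0,Δ+δ), u = (1,0,0,Δ), v = (1,1,0,Δ), w = (0,1,0,Δ), q = ((1+√2)/2, 1/2, δ², Δ+δ) of ℝ⁴ are affinely independent. -/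
/-!
The edge vectors from `p` are `u - p = (1,0,0,-δ)`, `v - p = (1,1,0,-δ)`, `w - p = (0,1,0,-δ)` and
`q - p = (a,b,δ²,0)`. Only `q - p` has a nonzero third coordinate, so expanding along that column
leaves `δ²` times a `3 × 3` determinant equal to `δ`; the edge determinant is `δ³ ≠ 0`.
-/

theorem affineIndependent_iff_linearIndependent_succ_vsub_zero {k V P : Type*} [Ring k]
    [AddCommGroup V] [Module k V] [AddTorsor V P] {n : ℕ} (p : Fin (n + 1) → P) :
    AffineIndependent k p ↔ LinearIndependent k (fun i : Fin n ↦ p i.succ -ᵥ p 0) := by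
  rw [affineIndependent_iff_linearIndependent_vsub k p 0,
    ← linearIndependent_equiv (finSuccAboveEquiv (0 : Fin (n + 1)))]
  rfl

theorem PiLp.linearIndependent_of_det_ne_zero {K ι : Type*} [Field K] [Fintype ι] [DecidableEq ι]
    {q : ENNReal} {v : ι → PiLp q (fun _ : ι ↦ K)} (h : (Matrix.of fun i j ↦ v i j).det ≠ 0) :
    LinearIndependent K v :=
  LinearIndependent.of_comp (WithLp.linearEquiv q K (ι → K)).toLinearMap
    (Matrix.linearIndependent_rows_of_det_ne_zero h)

theorem det_puvwq_edgeMatrix {R : Type*} [CommRing R] (a b c δ : R) :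
    !![1, 0, 0, -δ; 1, 1, 0, -δ; 0, 1, 0, -δ; a, b, c, 0].det = c * δ := by
  simp [Matrix.det_succ_row_zero, Fin.sum_univ_succ, Fin.succAbove]
  ring

/-- The five points `p, u, v, w, q` are affinely independent. -/
theorem puvwq_affineIndependent (Δ δ : ℝ) (hδ : 0 < δ) :
    AffineIndependent ℝ
      ![pt 0 0 0 (Δ + δ), pt 1 0 0 Δ, pt 1 1 0 Δ, pt 0 1 0 Δ,
        pt ((1 + Real.sqrt 2)/2) (1/2) (δ^2) (Δ + δ)] := by
  rw [affineIndependent_iff_linearIndependent_succ_vsub_zero]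
  refine PiLp.linearIndependent_of_det_ne_zero <| ne_of_eq_of_ne (congrArg Matrix.det ?_)
    ((det_puvwq_edgeMatrix ((1 + √2) / 2) (1 / 2) (δ ^ 2) δ).trans_ne (by positivity))
  ext i j
  fin_cases i <;> fin_cases j <;> simp [pt]
end

section
/- Fix Δ ∈ ℝ and 0 < δ < 1. The circumcenter of the 4-simplex in ℝ⁴ with vertices p = (0,0,0,Δ+δ), u = (1,0,0,Δ), v = (1,1,0,Δ), w = (0,1,0,Δ), q = ((1+√2)/2, 1/2, δ², Δ+δ) is the point c' = (1/2, 1/2, δ²/2, Δ+δ/2), and its circumradius equals √(1/2 + δ²/4 + δ⁴/4), which is strictly less than 1. -/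
theorem Affine.Simplex.circumcenter_eq_and_circumradius_eq_of_dist_eq
    {V : Type*} [NormedAddCommGroup V] [InnerProductSpace ℝ V] [FiniteDimensional ℝ V] {n : ℕ}
    (s : Affine.Simplex ℝ V n) (hn : Module.finrank ℝ V = n) {c : V} {r : ℝ}
    (hr : ∀ i, dist (s.points i) c = r) :
    s.circumcenter = c ∧ s.circumradius = r := by
  have hc : c ∈ affineSpan ℝ (Set.range s.points) := by
    rw [s.span_eq_top hn]
    exact AffineSubspace.mem_top ℝ V c
  exact ⟨(s.eq_circumcenter_of_dist_eq hc hr).symm, (s.eq_circumradius_of_dist_eq hc hr).symm⟩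

theorem dist_pt (a b c d a' b' c' d' : ℝ) :
    dist (pt a b c d) (pt a' b' c' d')
      = √((a - a') ^ 2 + (b - b') ^ 2 + (c - c') ^ 2 + (d - d') ^ 2) := by
  rw [EuclideanSpace.dist_eq]
  simp [pt, Fin.sum_univ_four, Real.dist_eq, sq_abs]

theorem dist_puvwq_eq (Δ δ : ℝ) (i : Fin 5) :
    dist (![pt 0 0 0 (Δ + δ), pt 1 0 0 Δ, pt 1 1 0 Δ, pt 0 1 0 Δ,
        pt ((1 + √2) / 2) (1 / 2) (δ ^ 2) (Δ + δ)] i) (pt (1/2) (1/2) (δ^2/2) (Δ + δ/2))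
      = √(1/2 + δ^2/4 + δ^4/4) := by
  have hsqrt2 : √2 ^ 2 = 2 := Real.sq_sqrt zero_le_two
  fin_cases i <;> simp only [Fin.reduceFinMk, Matrix.cons_val, dist_pt] <;> congr 1 <;>
    [ring; ring; ring; ring; linear_combination hsqrt2 / 4]

/-- The circumcenter of the 4-simplex `[p, u, v, w, q]` is `c' = (1/2, 1/2, δ²/2, Δ+δ/2)`,
and its circumradius is `√(1/2 + δ²/4 + δ⁴/4) < 1` (for `0 < δ < 1`). -/
theorem circumcenter_puvwq (Δ δ : ℝ) (hδ0 : 0 < δ) (hδ1 : δ < 1)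
    (h : AffineIndependent ℝ
      ![pt 0 0 0 (Δ + δ), pt 1 0 0 Δ, pt 1 1 0 Δ, pt 0 1 0 Δ,
        pt ((1 + Real.sqrt 2)/2) (1/2) (δ^2) (Δ + δ)]) :
    (⟨_, h⟩ : Affine.Simplex ℝ (EuclideanSpace ℝ (Fin 4)) 4).circumcenter
      = pt (1/2) (1/2) (δ^2/2) (Δ + δ/2) ∧
    (⟨_, h⟩ : Affine.Simplex ℝ (EuclideanSpace ℝ (Fin 4)) 4).circumradius
      = Real.sqrt (1/2 + δ^2/4 + δ^4/4) ∧
    Real.sqrt (1/2 + δ^2/4 + δ^4/4) < 1 := by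
  obtain ⟨hcenter, hradius⟩ :=
    Affine.Simplex.circumcenter_eq_and_circumradius_eq_of_dist_eq ⟨_, h⟩
      finrank_euclideanSpace_fin (dist_puvwq_eq Δ δ)
  refine ⟨hcenter, hradius, (Real.sqrt_lt' one_pos).2 ?_⟩
  have hδsq : δ ^ 2 < 1 := pow_lt_one₀ hδ0.le hδ1 two_ne_zero
  nlinarith
end

section
/- Fix Δ ∈ ℝ and δ > 0, and define in ℝ⁴ the points p = (0,0,0,Δ+δ), u = (1,0,0,Δ), v = (1,1,0,Δ), w = (0,1,0,Δ), q = ((1+√2)/2, 1/2, δ², Δ+δ), and c_puvq = (1/2 + δ²(δ²+1)/(1+√2), 1/2, −1/2, Δ + δ/2 + δ(δ²+1)/(1+√2)). Then ‖c_puvq − p‖ = ‖c_puvq − u‖ = ‖c_puvq − v‖ = ‖c_puvq − q‖, and moreover ‖c_puvq − p‖ < ‖c_puvq − w‖. -/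
noncomputable def cpuvq (Δ δ : ℝ) : EuclideanSpace ℝ (Fin 4) :=
  pt (1/2 + δ^2 * (δ^2 + 1) / (1 + Real.sqrt 2)) (1/2) (-(1/2))
     (Δ + δ/2 + δ * (δ^2 + 1) / (1 + Real.sqrt 2))

lemma norm_pt_sub_pt (a b c d e f g h : ℝ) :
    ‖pt a b c d - pt e f g h‖ = √((a - e)^2 + (b - f)^2 + (c - g)^2 + (d - h)^2) := by
  rw [EuclideanSpace.norm_eq]
  simp [pt, Fin.sum_univ_four, sq_abs]

noncomputable def cpuvqOffset (δ : ℝ) : ℝ := δ * (δ^2 + 1) / (1 + √2)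

lemma cpuvq_eq_pt (Δ δ : ℝ) :
    cpuvq Δ δ = pt (1/2 + δ * cpuvqOffset δ) (1/2) (-(1/2)) (Δ + δ/2 + cpuvqOffset δ) := by
  rw [cpuvq, cpuvqOffset, mul_div_assoc', ← mul_assoc, ← sq]

lemma one_add_sqrt_two_mul_cpuvqOffset (δ : ℝ) :
    (1 + √2) * cpuvqOffset δ = δ * (δ^2 + 1) :=
  mul_div_cancel₀ _ (by positivity)

lemma cpuvqOffset_pos {δ : ℝ} (hδ : 0 < δ) : 0 < cpuvqOffset δ := by
  unfold cpuvqOffset; positivity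

/-- `c_puvq` is equidistant from `p`, `u`, `v`, `q`, and strictly closer to them
than to `w`. -/
theorem cpuvq_equidistant (Δ δ : ℝ) (hδ : 0 < δ) :
    ‖cpuvq Δ δ - pt 0 0 0 (Δ + δ)‖ = ‖cpuvq Δ δ - pt 1 0 0 Δ‖ ∧
    ‖cpuvq Δ δ - pt 1 0 0 Δ‖ = ‖cpuvq Δ δ - pt 1 1 0 Δ‖ ∧
    ‖cpuvq Δ δ - pt 1 1 0 Δ‖
      = ‖cpuvq Δ δ - pt ((1 + Real.sqrt 2)/2) (1/2) (δ^2) (Δ + δ)‖ ∧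
    ‖cpuvq Δ δ - pt 0 0 0 (Δ + δ)‖ < ‖cpuvq Δ δ - pt 0 1 0 Δ‖ := by
  have hβ := one_add_sqrt_two_mul_cpuvqOffset δ
  have hδβ : 0 < δ * cpuvqOffset δ := mul_pos hδ (cpuvqOffset_pos hδ)
  have hsqrt : √2 ^ 2 = 2 := Real.sq_sqrt (by norm_num)
  simp only [cpuvq_eq_pt, norm_pt_sub_pt]
  refine ⟨congrArg _ (by ring), congrArg _ (by ring), congrArg _ ?_, Real.sqrt_lt_sqrt ?_ ?_⟩
  · linear_combination δ * hβ - hsqrt / 4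
  · positivity
  · linarith
end

section
/- Fix Δ ∈ ℝ and 0 < δ < 1, and define in ℝ⁴ the points c' = (1/2, 1/2, δ²/2, Δ+δ/2), c_puvq = (1/2 + δ²(δ²+1)/(1+√2), 1/2, −1/2, Δ + δ/2 + δ(δ²+1)/(1+√2)), and c_pvwq = (1/2, 1/2 + δ²(δ²+1), −1/2, Δ + δ/2 + δ(δ²+1)). Then the absolute value of the fourth (t-) coordinate of c_puvq − c' is at most 4δ·‖c_puvq − c'‖, and the absolute value of the fourth coordinate of c_pvwq − c' is at most 4δ·‖c_pvwq − c'‖. -/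
noncomputable def c' (Δ δ : ℝ) : EuclideanSpace ℝ (Fin 4) :=
  pt (1/2) (1/2) (δ^2/2) (Δ + δ/2)

noncomputable def cpvwq (Δ δ : ℝ) : EuclideanSpace ℝ (Fin 4) :=
  pt (1/2) (1/2 + δ^2 * (δ^2 + 1)) (-(1/2)) (Δ + δ/2 + δ * (δ^2 + 1))

/-!
Both edge directions have `z`-component `-(1 + δ²)/2`, whose absolute value is at most the norm,
and `t`-component of absolute value at most `δ(1 + δ²)`; so the bound even holds with `2δ`.
-/

lemma EuclideanSpace.abs_apply_le_mul_norm_of_abs_apply_le {ι : Type*} [Fintype ι]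
    {v : EuclideanSpace ℝ ι} {i j : ι} {c : ℝ} (hc : 0 ≤ c) (h : |v j| ≤ c * |v i|) :
    |v j| ≤ c * ‖v‖ :=
  h.trans (mul_le_mul_of_nonneg_left (PiLp.norm_apply_le v i) hc)

lemma cpuvq_sub_c'_apply_two (Δ δ : ℝ) : (cpuvq Δ δ - c' Δ δ) 2 = -((1 + δ ^ 2) / 2) := by
  simp only [cpuvq, c', pt, PiLp.sub_apply, Matrix.cons_val]
  ring

lemma cpuvq_sub_c'_apply_three (Δ δ : ℝ) :
    (cpuvq Δ δ - c' Δ δ) 3 = δ * (1 + δ ^ 2) / (1 + Real.sqrt 2) := by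
  simp only [cpuvq, c', pt, PiLp.sub_apply, Matrix.cons_val]
  ring

lemma cpvwq_sub_c'_apply_two (Δ δ : ℝ) : (cpvwq Δ δ - c' Δ δ) 2 = -((1 + δ ^ 2) / 2) := by
  simp only [cpvwq, c', pt, PiLp.sub_apply, Matrix.cons_val]
  ring

lemma cpvwq_sub_c'_apply_three (Δ δ : ℝ) : (cpvwq Δ δ - c' Δ δ) 3 = δ * (1 + δ ^ 2) := by
  simp only [cpvwq, c', pt, PiLp.sub_apply, Matrix.cons_val]
  ring

lemma abs_apply_three_le_of_apply_two {v : EuclideanSpace ℝ (Fin 4)} {δ : ℝ} (hδ : 0 ≤ δ)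
    (h2 : v 2 = -((1 + δ ^ 2) / 2)) (h3 : |v 3| ≤ δ * (1 + δ ^ 2)) :
    |v 3| ≤ 4 * δ * ‖v‖ := by
  have hz : |v 3| ≤ 2 * δ * |v 2| := by
    rw [h2, abs_neg, abs_of_nonneg (by positivity : 0 ≤ (1 + δ ^ 2) / 2)]
    linarith
  calc |v 3| ≤ 2 * δ * ‖v‖ :=
        EuclideanSpace.abs_apply_le_mul_norm_of_abs_apply_le (by positivity) hz
    _ ≤ 4 * δ * ‖v‖ := by gcongr; norm_num

theorem edges_almost_horizontal_general (Δ δ : ℝ) (hδ0 : 0 < δ) :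
    |(cpuvq Δ δ - c' Δ δ) 3| ≤ 4 * δ * ‖cpuvq Δ δ - c' Δ δ‖ ∧
    |(cpvwq Δ δ - c' Δ δ) 3| ≤ 4 * δ * ‖cpvwq Δ δ - c' Δ δ‖ := by
  have hδ : 0 ≤ δ := hδ0.le
  refine ⟨abs_apply_three_le_of_apply_two hδ (cpuvq_sub_c'_apply_two Δ δ) ?_,
    abs_apply_three_le_of_apply_two hδ (cpvwq_sub_c'_apply_two Δ δ) ?_⟩
  · rw [cpuvq_sub_c'_apply_three, abs_of_nonneg (by positivity)]
    exact div_le_self (by positivity) (le_add_of_nonneg_right (Real.sqrt_nonneg 2))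
  · rw [cpvwq_sub_c'_apply_three, abs_of_nonneg (by positivity)]

/-- The edges through `c'` and `c_puvq`, resp. `c'` and `c_pvwq`, make `O(δ)` angles with
the horizontal hyperplane: the `t`-component of each direction vector is at most `4δ` times
its norm (for `0 < δ < 1`). -/
theorem edges_almost_horizontal (Δ δ : ℝ) (hδ0 : 0 < δ) (hδ1 : δ < 1) :
    |(cpuvq Δ δ - c' Δ δ) 3| ≤ 4 * δ * ‖cpuvq Δ δ - c' Δ δ‖ ∧
    |(cpvwq Δ δ - c' Δ δ) 3| ≤ 4 * δ * ‖cpvwq Δ δ - c' Δ δ‖ :=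
  edges_almost_horizontal_general Δ δ hδ0
end
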